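/- For every x ∈ ℓ∞ one has t(x) = f_C(x), i.e., lim_{θ→1⁻} limsup_{n→∞} Θ_{θ,n}(x) equals the supremum of f(x) over all positive continuous linear functionals f on ℓ∞ extending the Cesàro mean. -/

import Mathlib

open Filter Topology

noncomputable section

/-- The space `ℓ∞` of bounded real sequences. -/
abbrev EllInfty : Type := lp (fun _ : ℕ => ℝ) ⊤

/-- The characteristic sequence of a set `A ⊆ ℕ` (as a plain function). -/
def chiFun (A : Set ℕ) : ℕ → ℝ := A.indicator 1

lemma chiFun_memℓp (A : Set ℕ) : Memℓp (chiFun A) ⊤ := by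
  apply memℓp_infty
  refine ⟨1, ?_⟩
  rintro r ⟨n, rfl⟩
  by_cases h : n ∈ A <;> simp [chiFun, Set.indicator, h]

/-- The characteristic sequence of a set `A ⊆ ℕ` as an element of `ℓ∞`. -/
def chi (A : Set ℕ) : EllInfty := ⟨chiFun A, chiFun_memℓp A⟩

/-- `A(n) = |A ∩ {1,…,n}|` (as a real number). -/
def count (A : Set ℕ) (n : ℕ) : ℝ := ∑ k ∈ Finset.Icc 1 n, chiFun A k

/-- `A` has asymptotic density `d`, i.e. `A(n)/n → d`. -/
def HasDensity (A : Set ℕ) (d : ℝ) : Prop :=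
  Tendsto (fun n => count A n / n) atTop (𝓝 d)

/-- A density measure: a finitely additive measure `μ : 𝒫(ℕ) → [0,1]` with `μ(ℕ) = 1`
which extends the asymptotic density. -/
def IsDensityMeasure (μ : Set ℕ → ℝ) : Prop :=
  (∀ A B : Set ℕ, Disjoint A B → μ (A ∪ B) = μ A + μ B) ∧
  (∀ A : Set ℕ, μ A ∈ Set.Icc (0 : ℝ) 1) ∧
  μ Set.univ = 1 ∧
  (∀ A d, HasDensity A d → μ A = d)

/-- The sequence of Cesàro averages `(x₁ + … + xₙ)/n`. -/
def cesaroAvg (x : ℕ → ℝ) (n : ℕ) : ℝ := (∑ i ∈ Finset.Icc 1 n, x i) / n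

/-- `x` has Cesàro mean `c`. -/
def HasCesaro (x : ℕ → ℝ) (c : ℝ) : Prop := Tendsto (cesaroAvg x) atTop (𝓝 c)

/-- A functional on `ℓ∞` is positive if it is nonnegative on nonnegative sequences. -/
def IsPositiveFunctional (f : EllInfty → ℝ) : Prop :=
  ∀ x : EllInfty, (∀ n, 0 ≤ x n) → 0 ≤ f x

/-- A functional on `ℓ∞` extends the Cesàro mean. -/
def ExtendsCesaro (f : EllInfty → ℝ) : Prop :=
  ∀ (x : EllInfty) (c : ℝ), HasCesaro (⇑x) c → f x = c

/-- The set of positive continuous linear functionals on `ℓ∞` extending the Cesàro mean. -/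
def Cesex : Set (EllInfty →L[ℝ] ℝ) :=
  {f | IsPositiveFunctional f ∧ ExtendsCesaro f}

/-- `f_C(x) = sup { f(x) : f ∈ Cesex }`. -/
def fC (x : EllInfty) : ℝ := sSup ((fun f : EllInfty →L[ℝ] ℝ => f x) '' Cesex)

/-- `Θ_{θ,n}(x) = (Σ_{θn < i ≤ n} x_i) / (n(1-θ))`. -/
def Theta (x : ℕ → ℝ) (θ : ℝ) (n : ℕ) : ℝ :=
  (∑ i ∈ Finset.Icc 1 n, if θ * n < (i : ℝ) then x i else 0) / (n * (1 - θ))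

/-- `Θ_θ(x) = limsup_{n → ∞} Θ_{θ,n}(x)`. -/
def ThetaSup (x : ℕ → ℝ) (θ : ℝ) : ℝ := limsup (Theta x θ) atTop

/-- `t(x) = lim_{θ → 1⁻} Θ_θ(x)`. -/
def tFun (x : ℕ → ℝ) : ℝ := limUnder (𝓝[<] (1 : ℝ)) (ThetaSup x)

/-- `A_α(n) = Σ_{k ∈ A, k ≤ n} k^α`. -/
def aSum (A : Set ℕ) (α : ℝ) (n : ℕ) : ℝ :=
  ∑ k ∈ Finset.Icc 1 n, chiFun A k * (k : ℝ) ^ α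

/-- The upper `α`-density `d̄_α(A) = limsup_{n→∞} A_α(n)/ℕ_α(n)`. -/
def upperADens (A : Set ℕ) (α : ℝ) : ℝ :=
  limsup (fun n => aSum A α n / aSum Set.univ α n) atTop

/-- The lower `α`-density `d̲_α(A) = liminf_{n→∞} A_α(n)/ℕ_α(n)`. -/
def lowerADens (A : Set ℕ) (α : ℝ) : ℝ :=
  liminf (fun n => aSum A α n / aSum Set.univ α n) atTop

/-- `d̄_∞(A) = lim_{α→∞} d̄_α(A)`. -/
def dInftyUpper (A : Set ℕ) : ℝ := limUnder (atTop : Filter ℝ) (upperADens A)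

/-- `d̲_∞(A) = lim_{α→∞} d̲_α(A)`. -/
def dInftyLower (A : Set ℕ) : ℝ := limUnder (atTop : Filter ℝ) (lowerADens A)

/-- The quotient `(A(n) - A(⌊θn⌋))/(n - θn)` appearing in the Pólya density. -/
def polyaQuot (A : Set ℕ) (θ : ℝ) (n : ℕ) : ℝ :=
  (count A n - count A ⌊θ * n⌋₊) / (n - θ * n)

/-- The upper Pólya density `p̄(A)`. -/
def pUpper (A : Set ℕ) : ℝ :=
  limUnder (𝓝[<] (1 : ℝ)) (fun θ => limsup (polyaQuot A θ) atTop)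

/-- The lower Pólya density `p̲(A)`. -/
def pLower (A : Set ℕ) : ℝ :=
  limUnder (𝓝[<] (1 : ℝ)) (fun θ => liminf (polyaQuot A θ) atTop)

/-- `λ̄(A) = sup { μ(A) : μ a density measure }`. -/
def lamUpper (A : Set ℕ) : ℝ := sSup {r | ∃ μ, IsDensityMeasure μ ∧ μ A = r}

/-- `λ̲(A) = inf { μ(A) : μ a density measure }`. -/
def lamLower (A : Set ℕ) : ℝ := sInf {r | ∃ μ, IsDensityMeasure μ ∧ μ A = r}

/-- `d̄*(A) = inf { d(B) : B ⊇ A, B ∈ 𝒟 }`. -/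
def dUpperStar (A : Set ℕ) : ℝ := sInf {r | ∃ B, A ⊆ B ∧ HasDensity B r}

/-- `d̲*(A) = sup { d(B) : B ⊆ A, B ∈ 𝒟 }`. -/
def dLowerStar (A : Set ℕ) : ℝ := sSup {r | ∃ B, B ⊆ A ∧ HasDensity B r}

/-- The `ℱ`-limit of a (bounded) real sequence along an ultrafilter `ℱ`:
the unique `L` with `Tendsto x ℱ (𝓝 L)` (when it exists). -/
def ulim (F : Ultrafilter ℕ) (x : ℕ → ℝ) : ℝ := limUnder (F : Filter ℕ) x

/-- An ultrafilter is free (non-principal) iff it contains all cofinite sets. -/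
def IsFreeUltrafilter (F : Ultrafilter ℕ) : Prop := (F : Filter ℕ) ≤ Filter.cofinite

/-- The set of positive functionals extending Cesàro mean, inside the weak-* dual of `ℓ∞`. -/
def CesexW : Set (WeakDual ℝ EllInfty) :=
  {f | (∀ x : EllInfty, (∀ n, 0 ≤ x n) → 0 ≤ f x) ∧
    ∀ (x : EllInfty) (c : ℝ), HasCesaro (⇑x) c → f x = c}

/-!
For each `θ ∈ (0,1)`, `y ↦ Θ_θ(y) = limsup_n Θ_{θ,n}(y)` is a sublinear functional on `ℓ∞` which
is `≤ 0` on nonpositive sequences and equals the Cesàro mean wherever it exists. A Hahn–Banach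
extension from `ℝ x` is then an element of `Cesex` taking the value `Θ_θ(x)` at `x`, so
`Θ_θ(x) ≤ f_C(x)` for every `θ`.

Conversely, suppose `Θ_θ(x) < c` for `θ = θ_j → 1`. Then every long enough window `(⌊θ_j n⌋, n]`
has mean at most `c`, and such windows, with `j` growing, tile `ℕ` into a grid `b₀ < b₁ < ⋯`
with `b_{k+1} / b_k → 1`. Raising `x` on each window by the constant that makes its mean exactly
`c` gives `y ≥ x` whose partial sums are exact at the grid points, hence `y` has Cesàro mean `c`
and `f x ≤ f y = c` for every `f ∈ Cesex`. So `f_C(x) ≤ liminf_{θ → 1⁻} Θ_θ(x)`, and the two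
bounds force `Θ_θ(x) → f_C(x)`.
-/

open Finset

lemma abs_sum_Ioc_le {x : ℕ → ℝ} {M : ℝ} (hx : ∀ i, |x i| ≤ M) {m n : ℕ} (h : m ≤ n) :
    |∑ i ∈ Ioc m n, x i| ≤ M * (n - m) := by
  calc |∑ i ∈ Ioc m n, x i| ≤ ∑ _i ∈ Ioc m n, M :=
        (abs_sum_le_sum_abs _ _).trans (sum_le_sum fun i _ => hx i)
    _ = M * (n - m) := by rw [sum_const, Nat.card_Ioc, nsmul_eq_mul, Nat.cast_sub h, mul_comm]

lemma sum_Ioc_eq_sub (x : ℕ → ℝ) {m n : ℕ} (h : m ≤ n) :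
    ∑ i ∈ Ioc m n, x i = ∑ i ∈ Icc 1 n, x i - ∑ i ∈ Icc 1 m, x i := by
  change _ = ∑ i ∈ Ioc 0 n, x i - ∑ i ∈ Ioc 0 m, x i
  rw [eq_sub_iff_add_eq', sum_Ioc_consecutive x m.zero_le h]

lemma hasCesaro_const (c : ℝ) : HasCesaro (fun _ => c) c := by
  refine tendsto_const_nhds.congr' <| (eventually_ne_atTop 0).mono fun n hn => ?_
  simp only [cesaroAvg, sum_const, Nat.card_Icc, add_tsub_cancel_right, nsmul_eq_mul]
  field_simp

section Sequences

variable {x y : ℕ → ℝ} {M M' θ c : ℝ}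

lemma HasCesaro.neg (h : HasCesaro x c) : HasCesaro (-x) (-c) := by
  have : cesaroAvg (-x) = -cesaroAvg x := by
    ext n
    simp [cesaroAvg, neg_div]
  rw [HasCesaro, this]
  exact Filter.Tendsto.neg h

lemma theta_add : Theta (x + y) θ = Theta x θ + Theta y θ := by
  ext n
  simp only [Theta, Pi.add_apply, ← add_div, ← sum_add_distrib, ite_add_ite, add_zero]

lemma theta_smul (r : ℝ) : Theta (r • x) θ = r • Theta x θ := by
  ext n
  simp only [Theta, Pi.smul_apply, smul_eq_mul, mul_div_assoc', mul_sum, mul_ite, mul_zero]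

lemma theta_nonpos (hx : ∀ i, x i ≤ 0) (hθ : θ ≤ 1) (n : ℕ) : Theta x θ n ≤ 0 :=
  div_nonpos_of_nonpos_of_nonneg (sum_nonpos fun i _ => by split_ifs <;> simp [hx i])
    (mul_nonneg n.cast_nonneg (sub_nonneg.2 hθ))

lemma abs_theta_le (hx : ∀ i, |x i| ≤ M) (hθ : θ < 1) (n : ℕ) :
    |Theta x θ n| ≤ M / (1 - θ) := by
  have h1θ : 0 < 1 - θ := sub_pos.2 hθ
  have hM : 0 ≤ M := (abs_nonneg _).trans (hx 0)
  rcases n.eq_zero_or_pos with rfl | hn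
  · simp [Theta, div_nonneg hM h1θ.le]
  have hsum : |∑ i ∈ Icc 1 n, if θ * n < (i : ℝ) then x i else 0| ≤ n * M := by
    calc _ ≤ ∑ _i ∈ Icc 1 n, M := (abs_sum_le_sum_abs _ _).trans <| sum_le_sum fun i _ => by
            split_ifs
            · exact hx i
            · simpa using hM
      _ = n * M := by simp
  rw [Theta, abs_div, abs_of_pos (mul_pos (Nat.cast_pos.2 hn) h1θ),
    div_le_div_iff₀ (by positivity) h1θ]
  nlinarith

lemma isBoundedUnder_le_theta (hx : ∀ i, |x i| ≤ M) (hθ : θ < 1) :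
    IsBoundedUnder (· ≤ ·) atTop (Theta x θ) :=
  isBoundedUnder_of_eventually_le <| .of_forall fun n => (abs_le.1 (abs_theta_le hx hθ n)).2

lemma isBoundedUnder_ge_theta (hx : ∀ i, |x i| ≤ M) (hθ : θ < 1) :
    IsBoundedUnder (· ≥ ·) atTop (Theta x θ) :=
  isBoundedUnder_of_eventually_ge <| .of_forall fun n => (abs_le.1 (abs_theta_le hx hθ n)).1

lemma thetaSup_add_le (hx : ∀ i, |x i| ≤ M) (hy : ∀ i, |y i| ≤ M') (hθ : θ < 1) :
    ThetaSup (x + y) θ ≤ ThetaSup x θ + ThetaSup y θ := by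
  rw [ThetaSup, theta_add]
  exact limsup_add_le (isBoundedUnder_ge_theta hx hθ) (isBoundedUnder_le_theta hx hθ)
    (isBoundedUnder_ge_theta hy hθ).isCoboundedUnder_le (isBoundedUnder_le_theta hy hθ)

lemma thetaSup_smul (hx : ∀ i, |x i| ≤ M) (hθ : θ < 1) {r : ℝ} (hr : 0 ≤ r) :
    ThetaSup (r • x) θ = r * ThetaSup x θ := by
  rw [ThetaSup, theta_smul]
  exact ((monotone_mul_left_of_nonneg hr).map_limsup_of_continuousAt (Theta x θ)
    (continuous_const_mul r).continuousAt (isBoundedUnder_le_theta hx hθ)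
    (isBoundedUnder_ge_theta hx hθ).isCoboundedUnder_le).symm

lemma thetaSup_nonpos (hx : ∀ i, x i ≤ 0) (hxM : ∀ i, |x i| ≤ M) (hθ : θ < 1) :
    ThetaSup x θ ≤ 0 :=
  limsup_le_of_le (isBoundedUnder_ge_theta hxM hθ).isCoboundedUnder_le
    (.of_forall (theta_nonpos hx hθ.le))

lemma theta_eq_sum_Ioc (hθ : 0 ≤ θ) (n : ℕ) :
    Theta x θ n = (∑ i ∈ Ioc ⌊θ * n⌋₊ n, x i) / (n * (1 - θ)) := by
  rw [Theta, ← sum_filter]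
  congr 2
  ext i
  simp only [mem_filter, mem_Icc, mem_Ioc, Nat.floor_lt (mul_nonneg hθ n.cast_nonneg)]
  have hi : θ * n < i → 1 ≤ i := fun h => Nat.cast_pos.1 ((mul_nonneg hθ n.cast_nonneg).trans_lt h)
  tauto

lemma cesaroAvg_mul_div (m n : ℕ) : cesaroAvg x m * (m / n) = (∑ i ∈ Icc 1 m, x i) / n := by
  rcases m.eq_zero_or_pos with rfl | hm
  · simp
  · rw [cesaroAvg, div_mul_div_comm, mul_comm (m : ℝ), mul_div_mul_right _ _ (by positivity)]

lemma theta_eq_cesaroAvg (h0 : 0 ≤ θ) (h1 : θ ≤ 1) (n : ℕ) :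
    Theta x θ n = (cesaroAvg x n - cesaroAvg x ⌊θ * n⌋₊ * (⌊θ * n⌋₊ / n)) / (1 - θ) := by
  have hle : ⌊θ * n⌋₊ ≤ n := Nat.floor_le_of_le (mul_le_of_le_one_left n.cast_nonneg h1)
  rw [theta_eq_sum_Ioc h0, sum_Ioc_eq_sub x hle, cesaroAvg_mul_div, cesaroAvg, ← sub_div,
    div_div]

lemma tendsto_theta_of_hasCesaro (h : HasCesaro x c) (h0 : 0 < θ) (h1 : θ < 1) :
    Tendsto (Theta x θ) atTop (𝓝 c) := by
  have hfloor : Tendsto (fun n : ℕ => ⌊θ * n⌋₊) atTop atTop :=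
    tendsto_nat_floor_atTop.comp (tendsto_natCast_atTop_atTop.const_mul_atTop h0)
  have hratio : Tendsto (fun n : ℕ => (⌊θ * n⌋₊ : ℝ) / n) atTop (𝓝 θ) :=
    (tendsto_nat_floor_mul_div_atTop h0.le).comp tendsto_natCast_atTop_atTop
  have hlim := (h.sub ((h.comp hfloor).mul hratio)).div_const (1 - θ)
  rw [show (c - c * θ) / (1 - θ) = c by field_simp [(sub_pos.2 h1).ne']] at hlim
  exact hlim.congr fun n => (theta_eq_cesaroAvg h0.le h1.le n).symm

lemma thetaSup_of_hasCesaro (h : HasCesaro x c) (h0 : 0 < θ) (h1 : θ < 1) :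
    ThetaSup x θ = c :=
  (tendsto_theta_of_hasCesaro h h0 h1).limsup_eq

end Sequences

lemma exists_linearMap_le_of_sublinear {E : Type*} [AddCommGroup E] [Module ℝ E] {N : E → ℝ}
    (N_hom : ∀ c : ℝ, 0 < c → ∀ x, N (c • x) = c * N x) (N_add : ∀ x y, N (x + y) ≤ N x + N y)
    (x : E) : ∃ g : E →ₗ[ℝ] ℝ, (∀ y, g y ≤ N y) ∧ g x = N x := by
  have N_zero : N 0 = 0 := by
    have := N_hom 2 two_pos 0
    rw [smul_zero] at this
    linarith
  have N_neg (y : E) : -N y ≤ N (-y) := by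
    have := N_add y (-y)
    rw [add_neg_cancel, N_zero] at this
    linarith
  let f : E →ₗ.[ℝ] ℝ := LinearPMap.mkSpanSingleton' x (N x) fun c hc => by
    rcases smul_eq_zero.1 hc with rfl | rfl <;> simp [N_zero]
  have hfN (z : f.domain) : f z ≤ N z := by
    obtain ⟨z, hz⟩ := z
    obtain ⟨r, rfl⟩ := Submodule.mem_span_singleton.1 hz
    rw [LinearPMap.mkSpanSingleton'_apply, RingHom.id_apply, smul_eq_mul]
    rcases lt_trichotomy r 0 with hr | rfl | hr
    · calc r * N x = -r * -N x := by ring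
        _ ≤ -r * N (-x) := mul_le_mul_of_nonneg_left (N_neg x) (by linarith)
        _ = N (r • x) := by rw [← N_hom (-r) (by linarith), neg_smul_neg]
    · simp [N_zero]
    · rw [N_hom r hr]
  obtain ⟨g, hgf, hgN⟩ := exists_extension_of_le_sublinear f N N_hom N_add hfN
  refine ⟨g, hgN, ?_⟩
  rw [← f.domain.coe_mk x (Submodule.mem_span_singleton_self _), hgf]
  exact LinearPMap.mkSpanSingleton'_apply_self _ _ _ _

lemma abs_apply_le_norm (y : EllInfty) (i : ℕ) : |y i| ≤ ‖y‖ :=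
  lp.norm_apply_le_norm ENNReal.top_ne_zero y i

lemma coe_chi_univ : ⇑(chi Set.univ) = fun _ => 1 := by
  ext
  simp [chi, chiFun]

lemma apply_le_norm_of_isPositiveFunctional (g : EllInfty →ₗ[ℝ] ℝ)
    (hpos : IsPositiveFunctional g) (hces : ExtendsCesaro g) (y : EllInfty) : g y ≤ ‖y‖ := by
  have h1 : g (chi Set.univ) = 1 := hces _ 1 (coe_chi_univ ▸ hasCesaro_const 1)
  have h2 := hpos (‖y‖ • chi Set.univ - y) fun n => by
    simp only [lp.coeFn_sub, lp.coeFn_smul, coe_chi_univ, Pi.sub_apply, Pi.smul_apply,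
      smul_eq_mul, mul_one, sub_nonneg]
    exact (le_abs_self _).trans (abs_apply_le_norm y n)
  rwa [map_sub, map_smul, h1, smul_eq_mul, mul_one, sub_nonneg] at h2

lemma exists_mem_cesex_eq {p : EllInfty → ℝ}
    (p_hom : ∀ r : ℝ, 0 < r → ∀ y, p (r • y) = r * p y) (p_add : ∀ y z, p (y + z) ≤ p y + p z)
    (p_nonpos : ∀ y : EllInfty, (∀ n, y n ≤ 0) → p y ≤ 0)
    (p_le : ∀ (y : EllInfty) (c : ℝ), HasCesaro (⇑y) c → p y ≤ c) (x : EllInfty) :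
    ∃ f ∈ Cesex, f x = p x := by
  obtain ⟨g, hgp, hgx⟩ := exists_linearMap_le_of_sublinear p_hom p_add x
  have hpos : IsPositiveFunctional g := fun y hy => by
    have := (hgp (-y)).trans (p_nonpos (-y) fun n => by simp [hy n])
    rw [map_neg] at this
    linarith
  have hces : ExtendsCesaro g := fun y c hy => by
    have h1 := (hgp y).trans (p_le y c hy)
    have h2 := (hgp (-y)).trans (p_le (-y) (-c) (by rw [lp.coeFn_neg]; exact hy.neg))
    rw [map_neg] at h2
    linarith
  have hbound (y : EllInfty) : ‖g y‖ ≤ 1 * ‖y‖ := by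
    have := apply_le_norm_of_isPositiveFunctional g hpos hces (-y)
    rw [map_neg, norm_neg] at this
    rw [Real.norm_eq_abs, one_mul, abs_le]
    exact ⟨by linarith, apply_le_norm_of_isPositiveFunctional g hpos hces y⟩
  exact ⟨g.mkContinuous 1 hbound, ⟨hpos, hces⟩, hgx⟩

lemma exists_mem_cesex_eq_thetaSup (x : EllInfty) {θ : ℝ} (h0 : 0 < θ) (h1 : θ < 1) :
    ∃ f ∈ Cesex, f x = ThetaSup x θ := by
  refine exists_mem_cesex_eq (p := fun y => ThetaSup y θ) (fun r hr y => ?_) (fun y z => ?_)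
    (fun y hy => thetaSup_nonpos hy (abs_apply_le_norm y) h1)
    (fun y c hy => (thetaSup_of_hasCesaro hy h0 h1).le) x
  · simpa only [lp.coeFn_smul] using thetaSup_smul (abs_apply_le_norm y) h1 hr.le
  · simpa only [lp.coeFn_add] using
      thetaSup_add_le (abs_apply_le_norm y) (abs_apply_le_norm z) h1

section Grid

variable {b : ℕ → ℕ}

lemma tendsto_div_of_eq_on_grid {u : ℕ → ℝ} {K : ℝ}
    (hu : ∀ m n, m ≤ n → |u n - u m| ≤ K * (n - m)) (hb : StrictMono b)
    (hub : ∀ k, u (b k) = u (b 0))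
    (hgap : ∀ δ > 0, ∀ᶠ k in atTop, (b (k + 1) : ℝ) ≤ (1 + δ) * b k) :
    Tendsto (fun n => u n / n) atTop (𝓝 0) := by
  have hK : 0 ≤ K := by simpa using (abs_nonneg _).trans (hu 0 1 zero_le_one)
  rw [Metric.tendsto_nhds]
  intro ε hε
  set δ := ε / (2 * (K + 1))
  have hKδ : K * δ ≤ ε / 2 := by
    rw [mul_div_assoc', div_le_div_iff₀ (by positivity) two_pos]
    nlinarith
  obtain ⟨k₀, hk₀⟩ := eventually_atTop.1 (hgap δ (by positivity))
  have hA : ∀ᶠ n : ℕ in atTop, |u (b 0)| / n < ε / 2 :=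
    (tendsto_const_div_atTop_nhds_zero_nat _).eventually (gt_mem_nhds (half_pos hε))
  filter_upwards [hA, eventually_gt_atTop (b k₀)] with n hAn hn
  have hn0 : (0 : ℝ) < n := Nat.cast_pos.2 (Nat.zero_le _ |>.trans_lt hn)
  obtain ⟨k, hkn, hnk⟩ :=
    hb.exists_between_of_tendsto_atTop hb.tendsto_atTop ((hb.monotone k₀.zero_le).trans_lt hn)
  have hk : k₀ ≤ k := Nat.lt_succ_iff.1 (hb.lt_iff_lt.1 (hn.trans_le hnk))
  have hbk : (b k : ℝ) < n := Nat.cast_lt.2 hkn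
  have hwindow : (n : ℝ) - b k ≤ δ * n := by
    have := hk₀ k hk
    have : (n : ℝ) ≤ b (k + 1) := Nat.cast_le.2 hnk
    nlinarith [hε.le]
  have hun : |u n| ≤ |u (b 0)| + K * (δ * n) := by
    have := abs_sub_abs_le_abs_sub (u n) (u (b k))
    have := (hu _ _ hkn.le).trans (mul_le_mul_of_nonneg_left hwindow hK)
    rw [hub] at *
    linarith
  rw [Real.dist_0_eq_abs, abs_div, Nat.abs_cast, div_lt_iff₀ hn0]
  rw [div_lt_iff₀ hn0] at hAn
  nlinarith

lemma hasCesaro_of_sum_Ioc_eq {y : ℕ → ℝ} {c K : ℝ} (hy : ∀ i, |y i - c| ≤ K)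
    (hb : StrictMono b) (hgap : ∀ δ > 0, ∀ᶠ k in atTop, (b (k + 1) : ℝ) ≤ (1 + δ) * b k)
    (hwin : ∀ k, ∑ i ∈ Ioc (b k) (b (k + 1)), y i = c * (b (k + 1) - b k)) :
    HasCesaro y c := by
  set u : ℕ → ℝ := fun n => ∑ i ∈ Icc 1 n, (y i - c)
  have hu (m n : ℕ) (h : m ≤ n) : |u n - u m| ≤ K * (n - m) := by
    rw [← sum_Ioc_eq_sub _ h]
    exact abs_sum_Ioc_le hy h
  have hub (k : ℕ) : u (b k) = u (b 0) := by
    induction k with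
    | zero => rfl
    | succ k ih =>
      rw [← ih, ← sub_eq_zero, ← sum_Ioc_eq_sub _ (hb.monotone k.le_succ), sum_sub_distrib,
        hwin, sum_const, Nat.card_Ioc, nsmul_eq_mul, Nat.cast_sub (hb.monotone k.le_succ)]
      ring
  have hlim := (tendsto_div_of_eq_on_grid hu hb hub hgap).add_const c
  rw [zero_add] at hlim
  refine hlim.congr' ?_
  filter_upwards [eventually_ne_atTop 0] with n hn
  simp only [u, cesaroAvg, sum_sub_distrib, sum_const, Nat.card_Icc, add_tsub_cancel_right,
    nsmul_eq_mul]
  field_simp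
  ring

lemma StrictMono.findGreatest_lt_eq (hb : StrictMono b) {k i : ℕ} (h1 : b k < i)
    (h2 : i ≤ b (k + 1)) : Nat.findGreatest (fun j => b j < i) i = k := by
  refine Nat.findGreatest_eq_iff.2 ⟨hb.le_apply.trans h1.le, fun _ => h1, fun j hj _ => ?_⟩
  exact (h2.trans (hb.monotone hj)).not_gt

/-- `y` is `x` raised on each window `(b k, b (k+1)]` by the constant that makes its mean `c`. -/
lemma exists_le_hasCesaro {x : ℕ → ℝ} {M c : ℝ} (hx : ∀ i, |x i| ≤ M) (hb : StrictMono b)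
    (hgap : ∀ δ > 0, ∀ᶠ k in atTop, (b (k + 1) : ℝ) ≤ (1 + δ) * b k)
    (hwin : ∀ k, ∑ i ∈ Ioc (b k) (b (k + 1)), x i ≤ c * (b (k + 1) - b k)) :
    ∃ y : ℕ → ℝ, (∀ i, x i ≤ y i) ∧ (∀ i, |y i - c| ≤ 2 * M) ∧ HasCesaro y c := by
  set avg : ℕ → ℝ := fun k => (∑ i ∈ Ioc (b k) (b (k + 1)), x i) / (b (k + 1) - b k)
  set w : ℕ → ℕ := fun i => Nat.findGreatest (fun j => b j < i) i
  have hlen (k : ℕ) : (0 : ℝ) < b (k + 1) - b k := sub_pos.2 (Nat.cast_lt.2 (hb k.lt_succ_self))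
  have havg_le (k : ℕ) : avg k ≤ c := (div_le_iff₀ (hlen k)).2 (hwin k)
  have habs_avg (k : ℕ) : |avg k| ≤ M := by
    rw [abs_div, abs_of_pos (hlen k), div_le_iff₀ (hlen k)]
    exact abs_sum_Ioc_le hx (hb k.lt_succ_self).le
  have hyc (i : ℕ) : |x i + (c - avg (w i)) - c| ≤ 2 * M :=
    calc |x i + (c - avg (w i)) - c| = |x i - avg (w i)| := by ring_nf
      _ ≤ |x i| + |avg (w i)| := abs_sub _ _
      _ ≤ 2 * M := by linarith [hx i, habs_avg (w i)]
  refine ⟨fun i => x i + (c - avg (w i)), fun i => by linarith [havg_le (w i)], hyc,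
    hasCesaro_of_sum_Ioc_eq hyc hb hgap fun k => ?_⟩
  have hw : ∀ i ∈ Ioc (b k) (b (k + 1)), x i + (c - avg (w i)) = x i + (c - avg k) :=
    fun i hi => by rw [show w i = k from hb.findGreatest_lt_eq (mem_Ioc.1 hi).1 (mem_Ioc.1 hi).2]
  rw [sum_congr rfl hw, sum_add_distrib, sum_const, Nat.card_Ioc, nsmul_eq_mul,
    Nat.cast_sub (hb k.lt_succ_self).le]
  simp only [avg, mul_sub, mul_div_cancel₀ _ (hlen k).ne']
  ring

end Grid

lemma Nat.floor_mul_ceil_div {θ : ℝ} (h0 : 0 < θ) (h1 : θ ≤ 1) (n : ℕ) :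
    ⌊θ * ⌈n / θ⌉₊⌋₊ = n := by
  rw [Nat.floor_eq_iff (by positivity)]
  constructor
  · calc (n : ℝ) = θ * (n / θ) := by field_simp
      _ ≤ θ * ⌈n / θ⌉₊ := mul_le_mul_of_nonneg_left (Nat.le_ceil _) h0.le
  · calc θ * ⌈n / θ⌉₊ < θ * (n / θ + 1) :=
        mul_lt_mul_of_pos_left (Nat.ceil_lt_add_one (by positivity)) h0
      _ = n + θ := by field_simp
      _ ≤ n + 1 := by linarith

lemma Nat.lt_ceil_div {θ : ℝ} (h0 : 0 < θ) (h1 : θ < 1) {n : ℕ} (hn : 0 < n) : n < ⌈n / θ⌉₊ := by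
  rw [Nat.lt_ceil, lt_div_iff₀ h0]
  nlinarith [(Nat.cast_pos.2 hn : (0 : ℝ) < n)]

lemma eventually_ceil_div_le {θ : ℕ → ℝ} (hθ0 : ∀ n, 0 < θ n) (hθ : Tendsto θ atTop (𝓝 1))
    {δ : ℝ} (hδ : 0 < δ) : ∀ᶠ n in atTop, (⌈n / θ n⌉₊ : ℝ) ≤ (1 + δ) * n := by
  have hθ' : ∀ᶠ n in atTop, 1 / (1 + δ / 2) < θ n :=
    hθ.eventually (lt_mem_nhds ((div_lt_one (by positivity)).2 (by linarith)))
  filter_upwards [hθ', eventually_ge_atTop ⌈2 / δ⌉₊] with n hθn hn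
  have h2 : 2 / δ ≤ n := Nat.ceil_le.1 hn
  rw [div_le_iff₀ hδ] at h2
  rw [div_lt_iff₀ (by positivity)] at hθn
  have hdiv : n / θ n ≤ (1 + δ / 2) * n := by
    rw [div_le_iff₀ (hθ0 n)]
    nlinarith [(n.cast_nonneg : (0 : ℝ) ≤ n)]
  linarith [Nat.ceil_lt_add_one (div_nonneg n.cast_nonneg (hθ0 n).le)]

/-- The grid is `b (k+1) = ⌈b k / θ j⌉₊` with `j` the largest index `≤ b k` whose threshold for
`P j` is at most `b k`; this `j` tends to infinity, so the ratios `b (k+1) / b k` tend to `1`. -/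
lemma exists_grid {θ : ℕ → ℝ} (hθ : ∀ j, θ j ∈ Set.Ioo 0 1) (hlim : Tendsto θ atTop (𝓝 1))
    {P : ℕ → ℕ → Prop} (hP : ∀ j, ∀ᶠ n in atTop, P j n) :
    ∃ b : ℕ → ℕ, StrictMono b ∧ (∀ δ > 0, ∀ᶠ k in atTop, (b (k + 1) : ℝ) ≤ (1 + δ) * b k) ∧
      ∀ k, ∃ j, ⌊θ j * b (k + 1)⌋₊ = b k ∧ P j (b (k + 1)) := by
  choose N hN using fun j => eventually_atTop.1 (hP j)
  set J : ℕ → ℕ := fun n => Nat.findGreatest (fun j => N j ≤ n) n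
  have hJN {n : ℕ} (hn : N 0 ≤ n) : N (J n) ≤ n :=
    Nat.findGreatest_spec (P := fun j => N j ≤ n) n.zero_le hn
  have hJ : Tendsto J atTop atTop := tendsto_atTop_atTop.2 fun m =>
    ⟨max m (N m), fun n hn => Nat.le_findGreatest (le_of_max_le_left hn) (le_of_max_le_right hn)⟩
  set next : ℕ → ℕ := fun n => ⌈n / θ (J n)⌉₊
  set b : ℕ → ℕ := fun k => next^[k] (max (N 0) 1)
  have hb_succ (k : ℕ) : b (k + 1) = next (b k) := Function.iterate_succ_apply' _ _ _
  have hnext {n : ℕ} (hn : 0 < n) : n < next n := Nat.lt_ceil_div (hθ _).1 (hθ _).2 hn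
  have hb_ge (k : ℕ) : max (N 0) 1 ≤ b k := by
    induction k with
    | zero => rfl
    | succ k ih => exact ih.trans (hb_succ k ▸ hnext (by omega)).le
  have hb : StrictMono b :=
    strictMono_nat_of_lt_succ fun k => hb_succ k ▸ hnext (by have := hb_ge k; omega)
  refine ⟨b, hb, fun δ hδ => ?_, fun k => ⟨J (b k), ?_, hN _ _ ?_⟩⟩
  · filter_upwards [hb.tendsto_atTop.eventually
      (eventually_ceil_div_le (fun n => (hθ _).1) (hlim.comp hJ) hδ)] with k hk
    rwa [hb_succ]
  · rw [hb_succ]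
    exact Nat.floor_mul_ceil_div (hθ _).1 (hθ _).2.le _
  · exact (hJN (le_of_max_le_left (hb_ge k))).trans (hb.monotone k.le_succ)

lemma eventually_sum_Ioc_floor_le {x : ℕ → ℝ} {M θ c : ℝ} (hx : ∀ i, |x i| ≤ M)
    (hθ : θ ∈ Set.Ioo 0 1) (hc : ThetaSup x θ < c) :
    ∀ᶠ n : ℕ in atTop, ∑ i ∈ Ioc ⌊θ * n⌋₊ n, x i ≤ c * (n - ⌊θ * n⌋₊) := by
  obtain ⟨c', hc', hc'c⟩ := exists_between hc
  have h1θ : 0 < 1 - θ := sub_pos.2 hθ.2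
  have hlarge : ∀ᶠ n : ℕ in atTop, |c| ≤ (c - c') * (1 - θ) * n :=
    (tendsto_natCast_atTop_atTop.const_mul_atTop (by nlinarith)).eventually_ge_atTop _
  filter_upwards [eventually_lt_of_limsup_lt hc' (isBoundedUnder_le_theta hx hθ.2), hlarge,
    eventually_gt_atTop 0] with n hθn hn hn0
  rw [theta_eq_sum_Ioc hθ.1.le, div_lt_iff₀ (mul_pos (Nat.cast_pos.2 hn0) h1θ)] at hθn
  have hfloor : θ * n - 1 < ⌊θ * n⌋₊ := by
    linarith [Nat.lt_floor_add_one (θ * n)]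
  have hfloor' : (⌊θ * n⌋₊ : ℝ) ≤ θ * n := Nat.floor_le (mul_nonneg hθ.1.le n.cast_nonneg)
  have hfrac : -|c| ≤ c * (θ * n - ⌊θ * n⌋₊) := by
    have := neg_abs_le (c * (θ * n - ⌊θ * n⌋₊))
    rw [abs_mul] at this
    have ht : |θ * n - ⌊θ * n⌋₊| ≤ 1 := abs_le.2 ⟨by linarith, by linarith⟩
    linarith [mul_le_of_le_one_right (abs_nonneg c) ht]
  linarith

lemma apply_le_of_le_of_hasCesaro {f : EllInfty →L[ℝ] ℝ} (hf : f ∈ Cesex) {x y : EllInfty}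
    (hxy : ∀ n, x n ≤ y n) {c : ℝ} (hy : HasCesaro y c) : f x ≤ c := by
  have := hf.1 (y - x) fun n => by simpa using hxy n
  rw [map_sub, hf.2 y c hy] at this
  linarith

lemma apply_le_of_frequently_thetaSup_lt {f : EllInfty →L[ℝ] ℝ} (hf : f ∈ Cesex) (x : EllInfty)
    {c : ℝ} (h : ∃ᶠ θ in 𝓝[<] 1, ThetaSup x θ < c) : f x ≤ c := by
  obtain ⟨θ, hlim, hθ⟩ :=
    exists_seq_forall_of_frequently (h.and_eventually (Ioo_mem_nhdsLT zero_lt_one))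
  obtain ⟨b, hb, hgap, hgrid⟩ := exists_grid (fun j => (hθ j).2)
    (tendsto_nhds_of_tendsto_nhdsWithin hlim)
    fun j => eventually_sum_Ioc_floor_le (abs_apply_le_norm x) (hθ j).2 (hθ j).1
  obtain ⟨y, hxy, hyc, hy⟩ := exists_le_hasCesaro (abs_apply_le_norm x) hb hgap fun k => by
    obtain ⟨j, hj, hwin⟩ := hgrid k
    rwa [hj] at hwin
  have hmem : Memℓp y ⊤ := memℓp_infty ⟨2 * ‖x‖ + |c|, by
    rintro _ ⟨i, rfl⟩
    linarith [abs_sub_abs_le_abs_sub (y i) c, hyc i, Real.norm_eq_abs (y i)]⟩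
  exact apply_le_of_le_of_hasCesaro hf (y := ⟨y, hmem⟩) hxy hy

lemma cesex_nonempty : Cesex.Nonempty :=
  let ⟨f, hf, _⟩ := exists_mem_cesex_eq_thetaSup 0 one_half_pos one_half_lt_one
  ⟨f, hf⟩

lemma bddAbove_image_cesex (x : EllInfty) :
    BddAbove ((fun f : EllInfty →L[ℝ] ℝ => f x) '' Cesex) := by
  refine ⟨‖x‖, ?_⟩
  rintro _ ⟨f, hf, rfl⟩
  exact apply_le_norm_of_isPositiveFunctional f.toLinearMap hf.1 hf.2 x

lemma thetaSup_le_fC (x : EllInfty) {θ : ℝ} (hθ : θ ∈ Set.Ioo 0 1) : ThetaSup x θ ≤ fC x := by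
  obtain ⟨f, hf, hfx⟩ := exists_mem_cesex_eq_thetaSup x hθ.1 hθ.2
  exact hfx ▸ le_csSup (bddAbove_image_cesex x) ⟨f, hf, rfl⟩

lemma fC_le_of_frequently_thetaSup_lt (x : EllInfty) {c : ℝ}
    (h : ∃ᶠ θ in 𝓝[<] 1, ThetaSup x θ < c) : fC x ≤ c :=
  csSup_le (cesex_nonempty.image _) <| by
    rintro _ ⟨f, hf, rfl⟩
    exact apply_le_of_frequently_thetaSup_lt hf x h

/-- For every `x ∈ ℓ∞` one has `t(x) = f_C(x)`. -/
theorem stmt13 (x : EllInfty) : tFun (⇑x) = fC x := by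
  refine (tendsto_order.2 ⟨fun a ha => ?_, fun a ha => ?_⟩).limUnder_eq
  · by_contra h
    obtain ⟨c, hac, hc⟩ := exists_between ha
    refine (fC_le_of_frequently_thetaSup_lt x ?_).not_gt hc
    exact (not_eventually.1 h).mono fun θ hθ => (not_lt.1 hθ).trans_lt hac
  · filter_upwards [Ioo_mem_nhdsLT zero_lt_one] with θ hθ
    exact (thetaSup_le_fC x hθ).trans_lt ha
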